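/- arXiv:1811.11299 — 5 statements merged into one kernel-verified Lean document; each statement's English description precedes it below -/
import Mathlib

section
/- Let p ∈ (1,∞). There exists a constant c(p) ≥ 1 such that for every Q > 1 and every ε > 0 there is a weight w on ℝ taking only 2 values (i.e., there exist real numbers 0 < a < b with w(x) ∈ {a, b} for a.e. x ∈ ℝ) such that Q ≤ [w]_{A_p} ≤ c(p)·Q and the doubling constants of w and of σ := w^{−1/(p−1)} satisfy D_w ≤ 2+ε and D_σ ≤ 2+ε. -/
/-!
Let `w` be `r = 4ᵖ Q` on a set `B` and `1` off it, so that `σ = w^{-1/(p-1)}` is `r^{-1/(p-1)} < 1`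
on `B` and `1` off it. Then `⟨w⟩_I ⟨σ⟩_I^{p-1} ≤ r` for every interval, and on `[0, 1)`, where `B`
has density between `1/4` and `3/4`, it is at least `r / 4ᵖ = Q`. Both weights are
`(2 + ε)`-doubling as soon as `B` is doubling-flat: `|B ∩ 2I| = 2 |B ∩ I| + O(δ |I|)` with `δ`
small in terms of `ε` and `r`.

Such a set is built from a branching random walk on the `2K`-adic intervals: every interval carries
a height, `K + 1` of its `2K` children are one higher and the others one lower, height `0` is
absorbing, and `B` is the set of points whose height never reaches `0`. Since `h ↦ ρʰ`, `ρ = (K - 1) / (K + 1)`, is harmonic for the walk, `B`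
has density exactly `1 - ρʰ` in an interval of height `h`. Heights of neighbouring intervals differ
by at most `2`, so at the scale of an interval `I` all intervals a few generations finer inside
`2I` have heights within `10` of each other, and the density of `B` on `2I` is constant up to
`O(1 / K)`.
-/

open MeasureTheory Set Filter Topology

/-- Average of `w` over the interval `[a, b)`. -/
noncomputable def avgOn (w : ℝ → ℝ) (a b : ℝ) : ℝ :=
  (b - a)⁻¹ * ∫ x in Set.Ico a b, w x

/-- A weight on `ℝ`: measurable, locally integrable, a.e. positive. -/
def IsWeight (w : ℝ → ℝ) : Prop :=
  Measurable w ∧ MeasureTheory.LocallyIntegrable w ∧ ∀ᵐ x ∂(volume : Measure ℝ), 0 < w x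

/-- The set of values `⟨w⟩_I ⟨σ⟩_I^{p-1}` over all bounded intervals `I`;
its supremum is the Muckenhoupt `A_p` characteristic `[w, σ]_{A_p}`. -/
noncomputable def apSet (p : ℝ) (w σ : ℝ → ℝ) : Set ℝ :=
  {c | ∃ a b : ℝ, a < b ∧ c = avgOn w a b * (avgOn σ a b) ^ (p - 1)}

/-- The doubling constant of `w` is at most `D`. -/
def DoublingLE (w : ℝ → ℝ) (D : ℝ) : Prop :=
  ∀ a b : ℝ, a < b →
    (∫ x in Set.Ico (a - (b - a) / 2) (b + (b - a) / 2), w x) ≤ D * ∫ x in Set.Ico a b, w x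

def IsDoublingFlat (B : Set ℝ) (δ : ℝ) : Prop :=
  ∀ u v : ℝ, u < v → |volume.real (B ∩ Ico (u - (v - u) / 2) (v + (v - u) / 2))
    - 2 * volume.real (B ∩ Ico u v)| ≤ δ * (v - u)

lemma IsDoublingFlat.mono {B : Set ℝ} {δ δ' : ℝ} (h : IsDoublingFlat B δ) (hδ : δ ≤ δ') :
    IsDoublingFlat B δ' :=
  fun u v huv => (h u v huv).trans (by gcongr)

lemma volume_real_inter_Ico_le (B : Set ℝ) {a b : ℝ} (hab : a ≤ b) :
    volume.real (B ∩ Ico a b) ≤ b - a := by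
  rw [← Real.volume_real_Ico_of_le hab]
  exact measureReal_mono inter_subset_right measure_Ico_lt_top.ne

section StepWeight

variable {B : Set ℝ}

noncomputable def stepWeight (B : Set ℝ) (c x : ℝ) : ℝ := 1 + B.indicator (fun _ => c - 1) x

lemma stepWeight_of_mem (c : ℝ) {x : ℝ} (hx : x ∈ B) : stepWeight B c x = c := by
  simp [stepWeight, hx]

lemma stepWeight_of_notMem (c : ℝ) {x : ℝ} (hx : x ∉ B) : stepWeight B c x = 1 := by
  simp [stepWeight, hx]

lemma stepWeight_eq_one_or_eq (B : Set ℝ) (c x : ℝ) :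
    stepWeight B c x = 1 ∨ stepWeight B c x = c := by
  by_cases hx : x ∈ B
  · exact Or.inr (stepWeight_of_mem c hx)
  · exact Or.inl (stepWeight_of_notMem c hx)

lemma stepWeight_rpow (c s : ℝ) : (fun x => stepWeight B c x ^ s) = stepWeight B (c ^ s) := by
  funext x
  by_cases hx : x ∈ B
  · rw [stepWeight_of_mem _ hx, stepWeight_of_mem _ hx]
  · rw [stepWeight_of_notMem _ hx, stepWeight_of_notMem _ hx, Real.one_rpow]

lemma isWeight_stepWeight (hB : MeasurableSet B) {c : ℝ} (hc : 0 < c) :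
    IsWeight (stepWeight B c) := by
  refine ⟨measurable_const.add (measurable_const.indicator hB),
    (locallyIntegrable_const 1).add ((locallyIntegrable_const _).indicator hB),
    ae_of_all _ fun x => ?_⟩
  by_cases hx : x ∈ B
  · rwa [stepWeight_of_mem _ hx]
  · rw [stepWeight_of_notMem _ hx]; exact one_pos

lemma setIntegral_stepWeight (hB : MeasurableSet B) (c : ℝ) {a b : ℝ} (hab : a ≤ b) :
    ∫ x in Ico a b, stepWeight B c x = (b - a) + (c - 1) * volume.real (B ∩ Ico a b) := by
  have hfin : volume (Ico a b) ≠ ⊤ := measure_Ico_lt_top.ne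
  unfold stepWeight
  rw [integral_add, setIntegral_indicator hB, setIntegral_const, setIntegral_const,
    Real.volume_real_Ico_of_le hab, inter_comm, smul_eq_mul, smul_eq_mul]
  · ring
  · exact integrableOn_const hfin
  · exact (integrableOn_const hfin).indicator hB

lemma avgOn_stepWeight (hB : MeasurableSet B) (c : ℝ) {a b : ℝ} (hab : a < b) :
    avgOn (stepWeight B c) a b = 1 + (c - 1) * (volume.real (B ∩ Ico a b) / (b - a)) := by
  rw [avgOn, setIntegral_stepWeight hB c hab.le]
  field_simp [(sub_pos.2 hab).ne']

lemma doublingLE_stepWeight (hB : MeasurableSet B) {c δ ε : ℝ} (hflat : IsDoublingFlat B δ)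
    (hε : 0 ≤ ε) (h₁ : (c - 1) * δ ≤ ε) (h₂ : (1 - c) * δ ≤ ε * c) :
    DoublingLE (stepWeight B c) (2 + ε) := by
  intro a b hab
  have hlen : a - (b - a) / 2 ≤ b + (b - a) / 2 := by linarith
  rw [setIntegral_stepWeight hB c hab.le, setIntegral_stepWeight hB c hlen]
  have hm := abs_le.1 (hflat a b hab)
  have hm₀ : 0 ≤ volume.real (B ∩ Ico a b) := measureReal_nonneg
  have hm₁ := volume_real_inter_Ico_le B hab.le
  set m := volume.real (B ∩ Ico a b)
  set m₂ := volume.real (B ∩ Ico (a - (b - a) / 2) (b + (b - a) / 2))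
  rcases le_total 1 c with hc | hc
  · nlinarith [mul_le_mul_of_nonneg_right h₁ (sub_pos.2 hab).le,
      mul_le_mul_of_nonneg_left hm.2 (sub_nonneg.2 hc), mul_nonneg hε (sub_nonneg.2 hc),
      mul_nonneg (mul_nonneg hε (sub_nonneg.2 hc)) hm₀]
  · nlinarith [mul_le_mul_of_nonneg_right h₂ (sub_pos.2 hab).le,
      mul_le_mul_of_nonneg_left hm.1 (sub_nonneg.2 hc),
      mul_le_mul_of_nonneg_left hm₁ (mul_nonneg hε (sub_nonneg.2 hc))]

lemma doublingLE_stepWeight_of_mem_Icc (hB : MeasurableSet B) {c r r' ε : ℝ} (hr : 1 ≤ r)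
    (hr'₀ : 0 < r') (hr'₁ : r' ≤ 1) (hc : c ∈ Icc r' r) (hε : 0 ≤ ε)
    (hflat : IsDoublingFlat B (ε * r' / r)) : DoublingLE (stepWeight B c) (2 + ε) := by
  have hδ₀ : 0 ≤ ε * r' / r := by positivity
  have hδr : ε * r' / r * r ≤ ε := by
    rw [div_mul_cancel₀ _ (by positivity)]; nlinarith
  have hδr' : ε * r' / r ≤ ε * r' := div_le_self (by positivity) hr
  exact doublingLE_stepWeight hB hflat hε (by nlinarith [hc.2]) (by nlinarith [hc.1])

lemma apSet_stepWeight_le (hB : MeasurableSet B) {p r r' : ℝ} (hp : 1 ≤ p) (hr : 1 ≤ r)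
    (hr'₀ : 0 ≤ r') (hr'₁ : r' ≤ 1) {y : ℝ} (hy : y ∈ apSet p (stepWeight B r) (stepWeight B r')) :
    y ≤ r := by
  obtain ⟨a, b, hab, rfl⟩ := hy
  rw [avgOn_stepWeight hB r hab, avgOn_stepWeight hB r' hab]
  set θ := volume.real (B ∩ Ico a b) / (b - a)
  have hθ₀ : 0 ≤ θ := div_nonneg measureReal_nonneg (sub_pos.2 hab).le
  have hθ₁ : θ ≤ 1 := (div_le_one (sub_pos.2 hab)).2 (volume_real_inter_Ico_le B hab.le)
  have hσ : (1 + (r' - 1) * θ) ^ (p - 1) ≤ 1 :=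
    Real.rpow_le_one (by nlinarith) (by nlinarith) (by linarith)
  have hσ₀ : 0 ≤ (1 + (r' - 1) * θ) ^ (p - 1) := Real.rpow_nonneg (by nlinarith) _
  calc (1 + (r - 1) * θ) * (1 + (r' - 1) * θ) ^ (p - 1) ≤ r * 1 := by
        gcongr
        nlinarith
    _ = r := mul_one r

lemma div_four_rpow_le_avgOn_mul (hB : MeasurableSet B) {p r r' : ℝ} (hp : 1 ≤ p) (hr : 1 ≤ r)
    (hr' : 0 ≤ r') (h₁ : 1 / 4 ≤ volume.real (B ∩ Ico 0 1))
    (h₂ : volume.real (B ∩ Ico 0 1) ≤ 3 / 4) :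
    r / 4 ^ p ≤ avgOn (stepWeight B r) 0 1 * avgOn (stepWeight B r') 0 1 ^ (p - 1) := by
  rw [avgOn_stepWeight hB r one_pos, avgOn_stepWeight hB r' one_pos, sub_zero, div_one]
  have hw : r / 4 ≤ 1 + (r - 1) * volume.real (B ∩ Ico 0 1) := by nlinarith
  have hσ : (1 / 4 : ℝ) ^ (p - 1) ≤ (1 + (r' - 1) * volume.real (B ∩ Ico 0 1)) ^ (p - 1) :=
    Real.rpow_le_rpow (by norm_num) (by nlinarith) (by linarith)
  calc r / 4 ^ p = r / 4 * (1 / 4 : ℝ) ^ (p - 1) := by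
        rw [Real.div_rpow zero_le_one (by norm_num), Real.one_rpow, Real.rpow_sub (by norm_num),
          Real.rpow_one]
        field_simp
    _ ≤ _ := by gcongr

end StepWeight

section Discrepancy

variable {B : Set ℝ} {θ : ℝ}

noncomputable def discrepancy (B : Set ℝ) (θ a b : ℝ) : ℝ :=
  volume.real (B ∩ Ico a b) - θ * (b - a)

lemma discrepancy_add (hB : MeasurableSet B) {a b c : ℝ} (hab : a ≤ b) (hbc : b ≤ c) :
    discrepancy B θ a c = discrepancy B θ a b + discrepancy B θ b c := by
  simp only [discrepancy]
  rw [← Ico_union_Ico_eq_Ico hab hbc, inter_union_distrib_left,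
    measureReal_union (Ico_disjoint_Ico_same.mono inter_subset_right inter_subset_right)
      (hB.inter measurableSet_Ico) (measure_inter_ne_top_of_right_ne_top measure_Ico_lt_top.ne)
      (measure_inter_ne_top_of_right_ne_top measure_Ico_lt_top.ne)]
  ring

lemma abs_discrepancy_le (hθ₀ : 0 ≤ θ) (hθ₁ : θ ≤ 1) {a b : ℝ} (hab : a ≤ b) :
    |discrepancy B θ a b| ≤ b - a := by
  have h₀ : 0 ≤ volume.real (B ∩ Ico a b) := measureReal_nonneg
  have h₁ := volume_real_inter_Ico_le B hab
  rw [discrepancy, abs_le]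
  constructor <;> nlinarith

lemma abs_discrepancy_run_le (hB : MeasurableSet B) {N η : ℝ} (hN : 0 < N) (j : ℤ) (L : ℕ)
    (h : ∀ l < L, |discrepancy B θ ((j + l) / N) ((j + l + 1) / N)| ≤ η / N) :
    |discrepancy B θ (j / N) ((j + L) / N)| ≤ η * L / N := by
  induction L with
  | zero => simp [discrepancy]
  | succ L ih =>
    have h₁ : (j : ℝ) / N ≤ (j + L) / N := by gcongr; simp
    have h₂ : ((j : ℝ) + L) / N ≤ (j + L + 1) / N := div_le_div_of_nonneg_right (by linarith) hN.le
    rw [Nat.cast_succ, ← add_assoc, discrepancy_add hB h₁ h₂]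
    calc _ ≤ _ := abs_add_le _ _
      _ ≤ η * L / N + η / N := add_le_add (ih fun l hl => h l (by omega)) (h L (by omega))
      _ = _ := by ring

lemma abs_discrepancy_le_of_subset (hB : MeasurableSet B) (hθ₀ : 0 ≤ θ) (hθ₁ : θ ≤ 1)
    {a a' b' b : ℝ} (ha : a ≤ a') (hab : a' ≤ b') (hb : b' ≤ b) :
    |discrepancy B θ a b| ≤ (a' - a) + |discrepancy B θ a' b'| + (b - b') := by
  rw [discrepancy_add hB ha (hab.trans hb), discrepancy_add hB hab hb, ← add_assoc]
  linarith [abs_add_three (discrepancy B θ a a') (discrepancy B θ a' b') (discrepancy B θ b' b),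
    abs_discrepancy_le (B := B) hθ₀ hθ₁ ha, abs_discrepancy_le (B := B) hθ₀ hθ₁ hb]

lemma abs_discrepancy_le_of_grid (hB : MeasurableSet B) (hθ₀ : 0 ≤ θ) (hθ₁ : θ ≤ 1)
    {N η a b : ℝ} (hN : 0 < N) (hη : 0 ≤ η) (hab : a ≤ b)
    (h : ∀ j : ℤ, a ≤ j / N → (j + 1) / N ≤ b →
      |discrepancy B θ (j / N) ((j + 1) / N)| ≤ η / N) :
    |discrepancy B θ a b| ≤ η * (b - a) + 2 / N := by
  set j₀ := ⌈a * N⌉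
  set j₁ := ⌊b * N⌋
  have ha₀ : a ≤ j₀ / N := by rw [le_div_iff₀ hN]; exact Int.le_ceil _
  have ha₁ : j₀ / N - a ≤ 1 / N := by
    rw [div_sub' hN.ne', div_le_div_iff_of_pos_right hN]; linarith [Int.ceil_lt_add_one (a * N)]
  have hb₀ : j₁ / N ≤ b := by rw [div_le_iff₀ hN]; exact Int.floor_le _
  have hb₁ : b - j₁ / N ≤ 1 / N := by
    rw [sub_div' hN.ne', div_le_div_iff_of_pos_right hN]; linarith [Int.lt_floor_add_one (b * N)]
  have htwo : 2 / N = 1 / N + 1 / N := by ring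
  rcases lt_or_ge j₁ j₀ with hlt | hle
  · -- no grid interval fits in `[a, b)`, which is therefore shorter than `1 / N`
    have : (j₁ : ℝ) / N + 1 / N ≤ j₀ / N := by
      rw [← add_div]; gcongr; exact_mod_cast hlt
    linarith [abs_discrepancy_le (B := B) hθ₀ hθ₁ hab, mul_nonneg hη (sub_nonneg.2 hab)]
  obtain ⟨L, hL⟩ := Int.eq_ofNat_of_zero_le (sub_nonneg.2 hle)
  have hj₁ : (j₁ : ℝ) = j₀ + L := by exact_mod_cast (show j₁ = j₀ + L by omega)
  have hrun := abs_discrepancy_run_le hB (θ := θ) (η := η) hN j₀ L fun l hl => by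
    have := h (j₀ + l)
    push_cast at this
    refine this (ha₀.trans (by gcongr; simp)) (le_trans ?_ hb₀)
    rw [hj₁, add_assoc]
    gcongr
    exact_mod_cast hl
  rw [← hj₁] at hrun
  have hlen : η * L / N ≤ η * (b - a) := by
    rw [mul_div_assoc, show (L : ℝ) / N = j₁ / N - j₀ / N by rw [hj₁]; ring]
    gcongr
  linarith [abs_discrepancy_le_of_subset hB hθ₀ hθ₁ ha₀ (by gcongr : j₀ / N ≤ j₁ / N) hb₀]

end Discrepancy

lemma abs_pow_sub_pow_le_mul_one_sub {r : ℝ} (hr₀ : 0 ≤ r) (hr₁ : r ≤ 1) (a b : ℕ) :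
    |r ^ a - r ^ b| ≤ |(a : ℝ) - b| * (1 - r) := by
  wlog hab : a ≤ b generalizing a b
  · rw [abs_sub_comm, abs_sub_comm (a : ℝ)]; exact this b a (by omega)
  obtain ⟨k, rfl⟩ := Nat.exists_eq_add_of_le hab
  have hbern := one_add_mul_le_pow (show (-2 : ℝ) ≤ -(1 - r) by linarith) k
  rw [show 1 + -(1 - r) = r by ring] at hbern
  have ha₀ : 0 ≤ r ^ a := pow_nonneg hr₀ a
  have ha₁ : r ^ a ≤ 1 := pow_le_one₀ hr₀ hr₁
  have hk₁ : r ^ k ≤ 1 := pow_le_one₀ hr₀ hr₁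
  rw [pow_add, abs_of_nonneg (by nlinarith), Nat.cast_add, sub_add_cancel_left, abs_neg,
    Nat.abs_cast]
  nlinarith [mul_nonneg (sub_nonneg.2 ha₁) (sub_nonneg.2 hk₁)]

lemma abs_floor_sub_floor_lt (x y : ℝ) : |(⌊x⌋ : ℝ) - ⌊y⌋| < |x - y| + 1 := by
  rw [abs_sub_lt_iff]
  constructor <;> linarith [Int.floor_le x, Int.floor_le y, Int.lt_floor_add_one x,
    Int.lt_floor_add_one y, le_abs_self (x - y), neg_abs_le (x - y)]

lemma exists_scale {M t : ℝ} (hM : 1 < M) (ht : 0 < t) :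
    ∃ n : ℕ, 1 ≤ t * M ^ (n + 1) ∧ (n = 0 ∨ t * M ^ n ≤ 1) := by
  classical
  have hex : ∃ m : ℕ, 1 ≤ t * M ^ m := by
    obtain ⟨m, hm⟩ := pow_unbounded_of_one_lt t⁻¹ hM
    exact ⟨m, by rw [inv_lt_iff_one_lt_mul₀ ht, mul_comm] at hm; exact hm.le⟩
  rcases Nat.eq_zero_or_pos (Nat.find hex) with h0 | hpos
  · refine ⟨0, ?_, Or.inl rfl⟩
    have := h0 ▸ Nat.find_spec hex
    rw [pow_zero, mul_one] at this
    rw [zero_add, pow_one]; nlinarith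
  · refine ⟨Nat.find hex - 1, ?_, Or.inr ?_⟩
    · rw [Nat.sub_add_cancel hpos]; exact Nat.find_spec hex
    · exact (not_le.1 (Nat.find_min hex (Nat.sub_lt hpos one_pos))).le

namespace FlatSet

section Height

/-- The two extreme children always go down, which keeps neighbouring cells within height `2` of
each other (`abs_height_add_one_sub_le`). -/
def walkStep (K P : ℕ) (i : ℤ) : ℕ :=
  if P = 0 then 0 else if 1 ≤ i ∧ i ≤ K + 1 then P + 1 else P - 1

/-- `height K y₀ n j` belongs to the cell `[j / (2K)ⁿ, (j + 1) / (2K)ⁿ)`, whose parent has index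
`j / 2K`. -/
def height (K y₀ : ℕ) : ℕ → ℤ → ℕ
  | 0, _ => y₀
  | n + 1, j => walkStep K (height K y₀ n (j / (2 * K))) (j % (2 * K))

variable {K y₀ : ℕ}

@[simp] lemma height_zero (j : ℤ) : height K y₀ 0 j = y₀ := rfl

lemma walkStep_zero (K : ℕ) (i : ℤ) : walkStep K 0 i = 0 := by simp [walkStep]

lemma walkStep_of_up {P : ℕ} {i : ℤ} (hP : P ≠ 0) (h : 1 ≤ i ∧ i ≤ K + 1) :
    walkStep K P i = P + 1 := by simp [walkStep, h, hP]

lemma walkStep_of_not_up {P : ℕ} {i : ℤ} (h : ¬ (1 ≤ i ∧ i ≤ K + 1)) :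
    walkStep K P i = P - 1 := by
  unfold walkStep; split_ifs <;> omega

lemma abs_walkStep_sub_le (K P : ℕ) (i : ℤ) : |(walkStep K P i : ℤ) - P| ≤ 1 := by
  rw [abs_le]; unfold walkStep; split_ifs <;> omega

lemma exists_eq_mul_add (hK : 0 < K) (j : ℤ) :
    ∃ (q : ℤ) (i : ℕ), i < 2 * K ∧ j = 2 * K * q + i := by
  have h0 := Int.emod_nonneg j (show (2 * K : ℤ) ≠ 0 by omega)
  have h1 := Int.emod_lt_of_pos j (show (0 : ℤ) < 2 * K by omega)
  exact ⟨j / (2 * K), (j % (2 * K)).toNat, by omega, by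
    rw [Int.toNat_of_nonneg h0, Int.mul_ediv_add_emod]⟩

lemma height_succ_mul_add (n : ℕ) (q : ℤ) {i : ℕ} (hi : i < 2 * K) :
    height K y₀ (n + 1) (2 * K * q + i) = walkStep K (height K y₀ n q) i := by
  have h2K : (0 : ℤ) < 2 * K := by omega
  rw [height, show 2 * K * q + i = i + q * (2 * K) by ring, Int.add_mul_ediv_right _ _ h2K.ne',
    Int.ediv_eq_zero_of_lt (by omega) (by omega), zero_add, Int.add_mul_emod_self_right,
    Int.emod_eq_of_lt (by omega) (by omega)]

lemma abs_height_succ_sub_le (n : ℕ) (j : ℤ) :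
    |(height K y₀ (n + 1) j : ℤ) - height K y₀ n (j / (2 * K))| ≤ 1 :=
  abs_walkStep_sub_le _ _ _

lemma abs_height_sub_ancestor_le (n k : ℕ) (j : ℤ) :
    |(height K y₀ (n + k) j : ℤ) - height K y₀ n (j / (2 * K) ^ k)| ≤ k := by
  induction k generalizing j with
  | zero => simp
  | succ k ih =>
    have hchild := abs_height_succ_sub_le (K := K) (y₀ := y₀) (n + k) j
    have hparent := ih (j / (2 * K))
    rw [Int.ediv_ediv_of_nonneg (by positivity), ← pow_succ'] at hparent
    rw [← add_assoc]; push_cast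
    rw [abs_le] at *; omega

lemma abs_height_add_one_sub_le (hK : 3 ≤ K) (n : ℕ) (j : ℤ) :
    |(height K y₀ n (j + 1) : ℤ) - height K y₀ n j| ≤ 2 := by
  induction n generalizing j with
  | zero => simp
  | succ n ih =>
    obtain ⟨q, i, hi, rfl⟩ := exists_eq_mul_add (show 0 < K by omega) j
    have hP := abs_walkStep_sub_le K (height K y₀ n q) i
    rcases lt_or_eq_of_le (show i + 1 ≤ 2 * K by omega) with hlt | heq
    · -- both cells are children of `q`, so both heights are within `1` of its height
      have hP' := abs_walkStep_sub_le K (height K y₀ n q) (i + 1 : ℕ)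
      rw [show 2 * K * q + i + 1 = 2 * K * q + (i + 1 : ℕ) by push_cast; ring,
        height_succ_mul_add n q hlt,
        height_succ_mul_add n q hi]
      rw [abs_le] at *; omega
    · -- the last child of `q` and the first child of `q + 1` both go down
      have hnext : 2 * K * q + i + 1 = 2 * K * (q + 1) + (0 : ℕ) := by
        have : (i : ℤ) + 1 = 2 * K := by exact_mod_cast heq
        push_cast; linear_combination this
      rw [hnext, height_succ_mul_add n _ (by omega), height_succ_mul_add n q hi,
        walkStep_of_not_up, walkStep_of_not_up]
      · have := ih q
        rw [abs_le] at *; omega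
      all_goals omega

lemma abs_height_sub_le (hK : 3 ≤ K) (n : ℕ) (j j' : ℤ) :
    |(height K y₀ n j' : ℤ) - height K y₀ n j| ≤ 2 * |j' - j| := by
  wlog h : j ≤ j' generalizing j j'
  · rw [abs_sub_comm, abs_sub_comm j']; exact this j' j (by omega)
  obtain ⟨d, hd⟩ := Int.eq_ofNat_of_zero_le (sub_nonneg.2 h)
  obtain rfl : j' = j + d := by omega
  rw [add_sub_cancel_left, Nat.abs_cast]
  clear h hd
  induction d with
  | zero => simp
  | succ d ih =>
    have := abs_height_add_one_sub_le (y₀ := y₀) hK n (j + d)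
    rw [Nat.cast_succ, ← add_assoc]
    rw [abs_le] at *; omega

end Height

section Cells

variable {K y₀ : ℕ}

def cell (K n : ℕ) (j : ℤ) : Set ℝ :=
  Ico (j / (2 * K : ℝ) ^ n) ((j + 1) / (2 * K : ℝ) ^ n)

lemma mem_cell_iff (hK : 0 < K) {x : ℝ} {n : ℕ} {j : ℤ} :
    x ∈ cell K n j ↔ ⌊x * (2 * K : ℝ) ^ n⌋ = j := by
  have : (0 : ℝ) < (2 * K : ℝ) ^ n := by positivity
  rw [cell, mem_Ico, Int.floor_eq_iff, div_le_iff₀ this, lt_div_iff₀ this]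

lemma floor_mul_pow_add (hK : 0 < K) (x : ℝ) (n k : ℕ) :
    ⌊x * (2 * K : ℝ) ^ n⌋ = ⌊x * (2 * K : ℝ) ^ (n + k)⌋ / (2 * K : ℤ) ^ k := by
  have h := Int.floor_div_natCast (x * (2 * K : ℝ) ^ (n + k)) ((2 * K) ^ k)
  push_cast at h
  rw [← h, pow_add, ← mul_assoc, mul_div_cancel_right₀ _ (by positivity)]

lemma volume_real_cell (n : ℕ) (j : ℤ) : volume.real (cell K n j) = ((2 * K : ℝ) ^ n)⁻¹ := by
  rw [cell, Real.volume_real_Ico_of_le (by gcongr; linarith), ← sub_div, add_sub_cancel_left,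
    one_div]

lemma volume_inter_cell_ne_top (S : Set ℝ) (n : ℕ) (j : ℤ) : volume (S ∩ cell K n j) ≠ ⊤ :=
  measure_inter_ne_top_of_right_ne_top measure_Ico_lt_top.ne

lemma cell_eq_biUnion_children (hK : 0 < K) (n : ℕ) (j : ℤ) :
    cell K n j = ⋃ i ∈ Finset.range (2 * K), cell K (n + 1) (2 * K * j + i) := by
  ext x
  simp only [mem_iUnion, Finset.mem_range, mem_cell_iff hK, floor_mul_pow_add hK x n 1, pow_one]
  constructor
  · rintro rfl
    obtain ⟨q, i, hi, hq⟩ := exists_eq_mul_add hK ⌊x * (2 * K : ℝ) ^ (n + 1)⌋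
    refine ⟨i, hi, ?_⟩
    rw [hq, show 2 * K * q + i = i + q * (2 * K) by ring, Int.add_mul_ediv_right _ _ (by omega),
      Int.ediv_eq_zero_of_lt (by omega) (by omega), zero_add]
    ring
  · rintro ⟨i, hi, hx⟩
    rw [hx, show 2 * K * j + i = i + j * (2 * K) by ring, Int.add_mul_ediv_right _ _ (by omega),
      Int.ediv_eq_zero_of_lt (by omega) (by omega), zero_add]

lemma cell_disjoint (hK : 0 < K) (n : ℕ) {j j' : ℤ} (h : j ≠ j') :
    Disjoint (cell K n j) (cell K n j') :=
  Set.disjoint_left.2 fun _ hx hx' => h ((mem_cell_iff hK).1 hx ▸ (mem_cell_iff hK).1 hx')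

lemma volume_real_inter_cell_eq_sum (hK : 0 < K) {S : Set ℝ} (hS : MeasurableSet S) (n : ℕ)
    (j : ℤ) : volume.real (S ∩ cell K n j) =
      ∑ i ∈ Finset.range (2 * K), volume.real (S ∩ cell K (n + 1) (2 * K * j + i)) := by
  rw [cell_eq_biUnion_children hK n j, inter_iUnion₂]
  refine measureReal_biUnion_finset (fun a _ b _ hab => ?_) (fun _ _ => hS.inter measurableSet_Ico)
    (fun _ _ => volume_inter_cell_ne_top _ _ _)
  refine (cell_disjoint hK _ fun h => hab ?_).mono inter_subset_right inter_subset_right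
  simpa using h

def survivors (K y₀ n : ℕ) : Set ℝ := {x | height K y₀ n ⌊x * (2 * K : ℝ) ^ n⌋ ≠ 0}

def flatSet (K y₀ : ℕ) : Set ℝ := ⋂ n, survivors K y₀ n

lemma measurableSet_survivors (n : ℕ) : MeasurableSet (survivors K y₀ n) :=
  (Int.measurable_floor.comp (measurable_id.mul_const _)) (MeasurableSet.of_discrete
    (s := {j : ℤ | height K y₀ n j ≠ 0}))

lemma height_floor_eq_zero_of_le (hK : 0 < K) {x : ℝ} {n m : ℕ} (hnm : n ≤ m)
    (h : height K y₀ n ⌊x * (2 * K : ℝ) ^ n⌋ = 0) : height K y₀ m ⌊x * (2 * K : ℝ) ^ m⌋ = 0 := by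
  induction m, hnm using Nat.le_induction with
  | base => exact h
  | succ m _ ih => rw [height, ← pow_one (2 * K : ℤ), ← floor_mul_pow_add hK, ih, walkStep_zero]

lemma survivors_antitone (hK : 0 < K) : Antitone (survivors K y₀) :=
  fun _ _ hnm _ hx h => hx (height_floor_eq_zero_of_le hK hnm h)

lemma survivors_inter_cell_eq_empty (hK : 0 < K) {n m : ℕ} {j : ℤ} (hnm : n ≤ m)
    (h : height K y₀ n j = 0) : survivors K y₀ m ∩ cell K n j = ∅ := by
  refine eq_empty_of_forall_notMem fun x ⟨hx, hxc⟩ => hx ?_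
  rw [mem_cell_iff hK] at hxc
  exact height_floor_eq_zero_of_le hK hnm (hxc ▸ h)

lemma survivors_inter_cell_eq_cell (hK : 0 < K) {n : ℕ} {j : ℤ} (h : height K y₀ n j ≠ 0) :
    survivors K y₀ n ∩ cell K n j = cell K n j :=
  inter_eq_self_of_subset_right fun x hx => by
    rw [mem_cell_iff hK] at hx
    simpa [survivors, hx] using h

end Cells

section Harmonic

variable {K : ℕ}

/-- `h ↦ ρ ^ h` is harmonic for the walk (`sum_rho_pow_walkStep`), so `1 - ρ ^ h` is the
probability of never being absorbed; `h ↦ ζ ^ h` is superharmonic away from `0` with rate `κ < 1`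
(`sum_zeta_pow_walkStep`), so the walk cannot linger at positive heights. -/
noncomputable def rho (K : ℕ) : ℝ := (K - 1) / (K + 1)

noncomputable def zeta (K : ℕ) : ℝ := (1 + rho K) / 2

noncomputable def kappa (K : ℕ) : ℝ := ((K + 1) * zeta K ^ 2 + (K - 1)) / (2 * K * zeta K)

lemma rho_nonneg (hK : 1 ≤ K) : 0 ≤ rho K :=
  div_nonneg (by simpa using (Nat.one_le_cast (α := ℝ)).2 hK) (by positivity)

lemma rho_lt_one : rho K < 1 := by
  rw [rho, div_lt_one (by positivity)]; linarith

lemma half_le_rho (hK : 3 ≤ K) : 1 / 2 ≤ rho K := by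
  have : (3 : ℝ) ≤ K := by exact_mod_cast hK
  rw [rho, le_div_iff₀ (by positivity)]; linarith

lemma one_sub_rho : 1 - rho K = 2 / (K + 1) := by
  rw [rho]; field_simp; ring

lemma rho_le_zeta : rho K ≤ zeta K := by
  have := rho_lt_one (K := K); rw [zeta]; linarith

lemma zeta_pos (hK : 1 ≤ K) : 0 < zeta K := by
  have := rho_nonneg hK; rw [zeta]; linarith

lemma kappa_nonneg (hK : 1 ≤ K) : 0 ≤ kappa K := by
  have := zeta_pos hK
  have : (1 : ℝ) ≤ K := by exact_mod_cast hK
  unfold kappa; positivity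

lemma kappa_lt_one (hK : 1 ≤ K) : kappa K < 1 := by
  have hζ := zeta_pos hK
  have : (1 : ℝ) ≤ K := by exact_mod_cast hK
  have hρ := rho_lt_one (K := K)
  rw [kappa, div_lt_one (by positivity)]
  have key : (K + 1) * zeta K ^ 2 - 2 * K * zeta K + (K - 1)
      = (K + 1) * (zeta K - 1) * (zeta K - rho K) := by
    rw [zeta, rho]; field_simp; ring
  nlinarith [show zeta K - 1 < 0 by rw [zeta]; linarith, show 0 < zeta K - rho K by
    rw [zeta]; linarith]

lemma card_filter_up (hK : 2 ≤ K) :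
    (Finset.filter (fun i : ℕ => 1 ≤ (i : ℤ) ∧ (i : ℤ) ≤ K + 1) (Finset.range (2 * K))).card
      = K + 1 := by
  have : Finset.filter (fun i : ℕ => 1 ≤ (i : ℤ) ∧ (i : ℤ) ≤ K + 1) (Finset.range (2 * K))
      = Finset.Icc 1 (K + 1) := by
    ext i
    simp only [Finset.mem_filter, Finset.mem_range, Finset.mem_Icc]
    omega
  rw [this, Nat.card_Icc, Nat.add_sub_cancel]

lemma sum_walkStep (hK : 2 ≤ K) (P : ℕ) (f : ℕ → ℝ) :
    ∑ i ∈ Finset.range (2 * K), f (walkStep K (P + 1) i) = (K + 1) * f (P + 2) + (K - 1) * f P := by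
  have hstep : ∀ i ∈ Finset.range (2 * K), f (walkStep K (P + 1) i) =
      if 1 ≤ (i : ℤ) ∧ (i : ℤ) ≤ K + 1 then f (P + 2) else f P := by
    intro i _
    split_ifs with h
    · rw [walkStep_of_up (by omega) h]
    · rw [walkStep_of_not_up h, Nat.add_sub_cancel]
  rw [Finset.sum_congr rfl hstep, Finset.sum_ite, Finset.sum_const, Finset.sum_const,
    Finset.filter_not, Finset.card_sdiff_of_subset (Finset.filter_subset _ _), card_filter_up hK,
    Finset.card_range, nsmul_eq_mul, nsmul_eq_mul, Nat.cast_sub (by omega)]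
  push_cast; ring

lemma sum_rho_pow_walkStep (hK : 2 ≤ K) (P : ℕ) :
    ∑ i ∈ Finset.range (2 * K), rho K ^ walkStep K P i = 2 * K * rho K ^ P := by
  rcases P with _ | P
  · simp [walkStep_zero]
  rw [sum_walkStep hK]
  have : (K + 1) * rho K ^ 2 + (K - 1) = 2 * K * rho K := by
    rw [rho]; field_simp; ring
  linear_combination rho K ^ P * this

lemma sum_zeta_pow_walkStep (hK : 2 ≤ K) (P : ℕ) :
    ∑ i ∈ Finset.range (2 * K), zeta K ^ walkStep K (P + 1) i
      = 2 * K * kappa K * zeta K ^ (P + 1) := by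
  have := (zeta_pos (show 1 ≤ K by omega)).ne'
  have : (K : ℝ) ≠ 0 := by positivity
  rw [sum_walkStep hK, kappa]
  field_simp
  ring

end Harmonic

section CellMeasure

variable {K y₀ : ℕ}

lemma sum_children_mul_inv_pow (f : ℕ → ℝ) (n : ℕ) :
    ∑ i ∈ Finset.range (2 * K), f i * ((2 * K : ℝ) ^ (n + 1))⁻¹
      = ((2 * K : ℝ))⁻¹ * (∑ i ∈ Finset.range (2 * K), f i) * ((2 * K : ℝ) ^ n)⁻¹ := by
  rw [← Finset.sum_mul, pow_succ, mul_inv]; ring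

lemma one_sub_rho_pow_mul_le_volume_real (hK : 2 ≤ K) (d n : ℕ) (j : ℤ) :
    (1 - rho K ^ height K y₀ n j) * ((2 * K : ℝ) ^ n)⁻¹
      ≤ volume.real (survivors K y₀ (n + d) ∩ cell K n j) := by
  have hK0 : 0 < K := by omega
  induction d generalizing n j with
  | zero =>
    by_cases h : height K y₀ n j = 0
    · simp [h, measureReal_nonneg]
    rw [add_zero, survivors_inter_cell_eq_cell hK0 h, volume_real_cell]
    have := pow_nonneg (rho_nonneg (show 1 ≤ K by omega)) (height K y₀ n j)
    have : (0 : ℝ) < ((2 * K : ℝ) ^ n)⁻¹ := by positivity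
    nlinarith
  | succ d ih =>
    rw [volume_real_inter_cell_eq_sum hK0 (measurableSet_survivors _), ← add_assoc,
      add_right_comm]
    calc (1 - rho K ^ height K y₀ n j) * ((2 * K : ℝ) ^ n)⁻¹
        = ∑ i ∈ Finset.range (2 * K),
            (1 - rho K ^ walkStep K (height K y₀ n j) i) * ((2 * K : ℝ) ^ (n + 1))⁻¹ := by
          rw [sum_children_mul_inv_pow, Finset.sum_sub_distrib, Finset.sum_const, Finset.card_range,
            nsmul_one, sum_rho_pow_walkStep hK]
          field_simp
          push_cast
          ring
      _ ≤ _ := Finset.sum_le_sum fun i hi => by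
          simpa [height_succ_mul_add n j (Finset.mem_range.1 hi)] using ih (n + 1) (2 * K * j + i)

lemma volume_real_le_one_sub_rho_pow_add (hK : 2 ≤ K) (d n : ℕ) (j : ℤ) :
    volume.real (survivors K y₀ (n + d) ∩ cell K n j)
      ≤ (1 - rho K ^ height K y₀ n j + zeta K ^ height K y₀ n j * kappa K ^ d)
        * ((2 * K : ℝ) ^ n)⁻¹ := by
  have hK0 : 0 < K := by omega
  have hκ := kappa_nonneg (show 1 ≤ K by omega)
  induction d generalizing n j with
  | zero =>
    calc _ ≤ volume.real (cell K n j) := measureReal_mono inter_subset_right measure_Ico_lt_top.ne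
      _ ≤ _ := by
        rw [volume_real_cell, pow_zero, mul_one]
        have := pow_le_pow_left₀ (rho_nonneg (show 1 ≤ K by omega)) rho_le_zeta (height K y₀ n j)
        have : (0 : ℝ) < ((2 * K : ℝ) ^ n)⁻¹ := by positivity
        nlinarith
  | succ d ih =>
    obtain ⟨P, hP⟩ | h := em (∃ P, height K y₀ n j = P + 1)
    · rw [volume_real_inter_cell_eq_sum hK0 (measurableSet_survivors _), ← add_assoc,
        add_right_comm]
      calc _ ≤ ∑ i ∈ Finset.range (2 * K),
            (1 - rho K ^ walkStep K (P + 1) i + zeta K ^ walkStep K (P + 1) i * kappa K ^ d)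
              * ((2 * K : ℝ) ^ (n + 1))⁻¹ := Finset.sum_le_sum fun i hi => by
            simpa [height_succ_mul_add n j (Finset.mem_range.1 hi), hP] using
              ih (n + 1) (2 * K * j + i)
        _ = _ := by
          rw [sum_children_mul_inv_pow, Finset.sum_add_distrib, Finset.sum_sub_distrib,
            ← Finset.sum_mul, sum_rho_pow_walkStep hK, sum_zeta_pow_walkStep hK, hP,
            Finset.sum_const, Finset.card_range, nsmul_one]
          field_simp
          push_cast
          ring
    · have h0 : height K y₀ n j = 0 := by
        by_contra h0; exact h ⟨_, (Nat.succ_pred_eq_of_ne_zero h0).symm⟩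
      rw [survivors_inter_cell_eq_empty hK0 (by omega) h0, h0]
      simp only [measureReal_empty, pow_zero, sub_self, zero_add, one_mul]
      positivity

lemma volume_real_flatSet_inter_cell (hK : 2 ≤ K) (n : ℕ) (j : ℤ) :
    volume.real (flatSet K y₀ ∩ cell K n j)
      = (1 - rho K ^ height K y₀ n j) * ((2 * K : ℝ) ^ n)⁻¹ := by
  have hK0 : 0 < K := by omega
  have hlim : Tendsto (fun d => volume.real (survivors K y₀ (n + d) ∩ cell K n j)) atTop
      (𝓝 (volume.real (flatSet K y₀ ∩ cell K n j))) := by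
    have := tendsto_measure_iInter_atTop (μ := volume)
      (s := fun m => survivors K y₀ m ∩ cell K n j)
      (fun m => ((measurableSet_survivors m).inter measurableSet_Ico).nullMeasurableSet)
      (fun _ _ hmm => inter_subset_inter_left _ (survivors_antitone hK0 hmm))
      ⟨0, volume_inter_cell_ne_top _ _ _⟩
    rw [← iInter_inter] at this
    exact ((ENNReal.tendsto_toReal (volume_inter_cell_ne_top _ _ _)).comp this).comp
      (tendsto_atTop_mono (fun d => Nat.le_add_left d n) tendsto_id)
  have hupper : Tendsto (fun d : ℕ => (1 - rho K ^ height K y₀ n j + zeta K ^ height K y₀ n j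
      * kappa K ^ d) * ((2 * K : ℝ) ^ n)⁻¹) atTop
      (𝓝 ((1 - rho K ^ height K y₀ n j) * ((2 * K : ℝ) ^ n)⁻¹)) := by
    have := tendsto_pow_atTop_nhds_zero_of_lt_one (kappa_nonneg (show 1 ≤ K by omega))
      (kappa_lt_one (show 1 ≤ K by omega))
    simpa using ((this.const_mul (zeta K ^ height K y₀ n j)).const_add
      (1 - rho K ^ height K y₀ n j)).mul_const ((2 * K : ℝ) ^ n)⁻¹
  exact le_antisymm
    (le_of_tendsto_of_tendsto' hlim hupper fun d => volume_real_le_one_sub_rho_pow_add hK d n j)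
    (ge_of_tendsto' hlim fun d => one_sub_rho_pow_mul_le_volume_real hK d n j)

end CellMeasure

section Doubling

variable {K y₀ : ℕ}

lemma abs_height_sub_le_of_mem (hK : 3 ≤ K) {n : ℕ} {t u : ℝ}
    (hn : n = 0 ∨ t * (2 * K : ℝ) ^ n ≤ 1) {j : ℤ} (hj₁ : u - t / 2 ≤ j / (2 * K : ℝ) ^ (n + 3))
    (hj₂ : (j + 1) / (2 * K : ℝ) ^ (n + 3) ≤ u + 3 * t / 2) :
    |(height K y₀ (n + 3) j : ℤ) - height K y₀ (n + 3) ⌊u * (2 * K : ℝ) ^ (n + 3)⌋| ≤ 10 := by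
  have hK0 : 0 < K := by omega
  set ju := ⌊u * (2 * K : ℝ) ^ (n + 3)⌋ with hju
  have hj := abs_height_sub_ancestor_le (K := K) (y₀ := y₀) n 3 j
  have hu := abs_height_sub_ancestor_le (K := K) (y₀ := y₀) n 3 ju
  rcases hn with rfl | hn
  · simp only [height_zero] at hj hu
    rw [abs_le] at *; omega
  -- the ancestors of generation `n` are at most two cells apart
  set x := (j : ℝ) / (2 * K : ℝ) ^ (n + 3)
  have hxj : ⌊x * (2 * K : ℝ) ^ (n + 3)⌋ = j := by
    rw [div_mul_cancel₀ _ (by positivity), Int.floor_intCast]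
  have hx : |x * (2 * K : ℝ) ^ n - u * (2 * K : ℝ) ^ n| ≤ 3 / 2 := by
    have : x ≤ (j + 1) / (2 * K : ℝ) ^ (n + 3) :=
      div_le_div_of_nonneg_right (by linarith) (by positivity)
    rw [← sub_mul, abs_mul, abs_of_pos (by positivity : (0 : ℝ) < (2 * K : ℝ) ^ n)]
    calc |x - u| * (2 * K : ℝ) ^ n ≤ 3 / 2 * t * (2 * K : ℝ) ^ n := by
          gcongr; rw [abs_le]; constructor <;> linarith
      _ ≤ 3 / 2 := by nlinarith
  have hfloor : |⌊x * (2 * K : ℝ) ^ n⌋ - ⌊u * (2 * K : ℝ) ^ n⌋| < 3 := by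
    have := abs_floor_sub_floor_lt (x * (2 * K : ℝ) ^ n) (u * (2 * K : ℝ) ^ n)
    exact_mod_cast (by linarith : (|(⌊x * (2 * K : ℝ) ^ n⌋ : ℝ) - ⌊u * (2 * K : ℝ) ^ n⌋| < 3))
  rw [floor_mul_pow_add hK0 x n 3, floor_mul_pow_add hK0 u n 3, hxj, ← hju] at hfloor
  have hn := (abs_height_sub_le (y₀ := y₀) hK n (ju / (2 * K) ^ 3) (j / (2 * K) ^ 3)).trans
    (mul_le_mul_of_nonneg_left (Int.le_of_lt_add_one (b := 2) hfloor) zero_le_two)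
  rw [abs_le] at *; omega

lemma measurableSet_flatSet : MeasurableSet (flatSet K y₀) :=
  MeasurableSet.iInter measurableSet_survivors

lemma abs_discrepancy_flatSet_le (hK : 2 ≤ K) {g h : ℕ} {S a b : ℝ} (hS₀ : 0 ≤ S) (hab : a ≤ b)
    (hS : ∀ j : ℤ, a ≤ j / (2 * K : ℝ) ^ g → (j + 1) / (2 * K : ℝ) ^ g ≤ b →
      |(height K y₀ g j : ℝ) - h| ≤ S) :
    |discrepancy (flatSet K y₀) (1 - rho K ^ h) a b|
      ≤ S * (1 - rho K) * (b - a) + 2 / (2 * K : ℝ) ^ g := by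
  have hρ₀ := rho_nonneg (show 1 ≤ K by omega)
  have hρ₁ := (rho_lt_one (K := K)).le
  have hN : (0 : ℝ) < (2 * K : ℝ) ^ g := by positivity
  refine abs_discrepancy_le_of_grid measurableSet_flatSet
    (by linarith [pow_le_one₀ hρ₀ hρ₁ (n := h)]) (by linarith [pow_nonneg hρ₀ h]) hN
    (by nlinarith) hab fun j h₁ h₂ => ?_
  have hcell := volume_real_flatSet_inter_cell (y₀ := y₀) hK g j
  rw [cell] at hcell
  rw [discrepancy, hcell, ← sub_div, add_sub_cancel_left, one_div, ← sub_mul, abs_mul,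
    abs_of_pos (inv_pos.2 hN), div_eq_mul_inv]
  gcongr
  rw [sub_sub_sub_cancel_left, abs_sub_comm]
  exact (abs_pow_sub_pow_le_mul_one_sub hρ₀ hρ₁ _ _).trans
    (mul_le_mul_of_nonneg_right (hS j h₁ h₂) (by linarith))

lemma isDoublingFlat_flatSet (hK : 3 ≤ K) : IsDoublingFlat (flatSet K y₀) (100 / K) := by
  intro u v huv
  have hK' : (3 : ℝ) ≤ K := by exact_mod_cast hK
  set t := v - u
  obtain ⟨n, hn₁, hn₂⟩ := exists_scale (M := 2 * K) (by linarith) (sub_pos.2 huv)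
  set N := (2 * K : ℝ) ^ (n + 3) with hNdef
  set h := height K y₀ (n + 3) ⌊u * N⌋ with hh
  have hspread : ∀ j : ℤ, u - t / 2 ≤ j / N → (j + 1) / N ≤ v + t / 2 →
      |(height K y₀ (n + 3) j : ℝ) - h| ≤ 10 := fun j h₁ h₂ => by
    have := abs_height_sub_le_of_mem (y₀ := y₀) hK hn₂ h₁ (by linarith)
    rw [← hNdef, ← hh] at this
    exact_mod_cast this
  have hbig := abs_discrepancy_flatSet_le (by omega) (by norm_num)
    (by linarith : u - t / 2 ≤ v + t / 2) hspread
  have hsmall := abs_discrepancy_flatSet_le (by omega) (by norm_num) huv.le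
    fun j h₁ h₂ => hspread j (by linarith) (by linarith)
  have hN : 1 / N ≤ t / (4 * K ^ 2) := by
    rw [div_le_div_iff₀ (by positivity) (by positivity)]
    calc 1 * (4 * K ^ 2) ≤ t * (2 * K : ℝ) ^ (n + 1) * (4 * K ^ 2) := by gcongr
      _ = t * N := by ring
  have hρ : 1 - rho K ≤ 2 / K := by
    rw [one_sub_rho]; gcongr; linarith
  have hdisc : volume.real (flatSet K y₀ ∩ Ico (u - t / 2) (v + t / 2))
      - 2 * volume.real (flatSet K y₀ ∩ Ico u v)
      = discrepancy (flatSet K y₀) (1 - rho K ^ h) (u - t / 2) (v + t / 2)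
        - 2 * discrepancy (flatSet K y₀) (1 - rho K ^ h) u v := by
    simp only [discrepancy, t]; ring
  rw [hdisc]
  calc _ ≤ |discrepancy (flatSet K y₀) (1 - rho K ^ h) (u - t / 2) (v + t / 2)|
        + 2 * |discrepancy (flatSet K y₀) (1 - rho K ^ h) u v| := by
        exact (abs_sub _ _).trans_eq (by rw [abs_mul, abs_two])
    _ ≤ 40 * (1 - rho K) * t + 6 * (1 / N) := by
        rw [div_eq_mul_one_div 2 N] at hbig hsmall
        nlinarith
    _ ≤ 40 * (2 / K) * t + 6 * (t / (4 * K ^ 2)) := by gcongr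
    _ ≤ 100 / K * t := by
        rw [show 6 * (t / (4 * K ^ 2)) = 3 / (2 * K) * (1 / K * t) by field_simp; ring,
          show 40 * (2 / K) * t = 80 * (1 / K * t) by ring,
          show 100 / K * t = 100 * (1 / K * t) by ring]
        have : 3 / (2 * K) ≤ (1 : ℝ) := by rw [div_le_one (by positivity)]; linarith
        have : 0 ≤ 1 / (K : ℝ) * t := by positivity
        nlinarith

theorem exists_isDoublingFlat {δ : ℝ} (hδ : 0 < δ) :
    ∃ B : Set ℝ, MeasurableSet B ∧ IsDoublingFlat B δ ∧
      1 / 4 ≤ volume.real (B ∩ Ico 0 1) ∧ volume.real (B ∩ Ico 0 1) ≤ 3 / 4 := by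
  obtain ⟨K, hK, hKδ⟩ : ∃ K : ℕ, 3 ≤ K ∧ 100 / δ ≤ K :=
    ⟨max 3 ⌈100 / δ⌉₊, le_max_left _ _, (Nat.le_ceil _).trans (by exact_mod_cast le_max_right _ _)⟩
  have hρ := half_le_rho hK
  -- start at the height `y + 1` for which `3 / 8 ≤ ρ ^ (y + 1) < 3 / 4`
  obtain ⟨y, hy₁, hy₂⟩ := exists_nat_pow_near_of_lt_one (by norm_num : (0 : ℝ) < 3 / 4)
    (by norm_num) (by linarith) (rho_lt_one (K := K))
  have hcell := volume_real_flatSet_inter_cell (K := K) (y₀ := y + 1) (by omega) 0 0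
  rw [show cell K 0 0 = Ico 0 1 by simp [cell], height_zero, pow_zero, inv_one, mul_one] at hcell
  refine ⟨flatSet K (y + 1), measurableSet_flatSet, (isDoublingFlat_flatSet hK).mono ?_, ?_, ?_⟩
  · rw [div_le_iff₀ hδ] at hKδ
    rw [div_le_iff₀ (by positivity)]; linarith
  · rw [hcell]; linarith
  · rw [hcell, pow_succ]; nlinarith

end Doubling

end FlatSet

theorem statement4 (p : ℝ) (hp : 1 < p) :
    ∃ c : ℝ, 1 ≤ c ∧
      ∀ Q ε : ℝ, 1 < Q → 0 < ε →
        ∃ w : ℝ → ℝ, IsWeight w ∧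
          (∃ a b : ℝ, 0 < a ∧ a < b ∧
            ∀ᵐ x ∂(volume : Measure ℝ), w x = a ∨ w x = b) ∧
          Q ≤ sSup (apSet p w (fun x => w x ^ (-(1 : ℝ) / (p - 1)))) ∧
          sSup (apSet p w (fun x => w x ^ (-(1 : ℝ) / (p - 1)))) ≤ c * Q ∧
          DoublingLE w (2 + ε) ∧
          DoublingLE (fun x => w x ^ (-(1 : ℝ) / (p - 1))) (2 + ε) := by
  refine ⟨4 ^ p, Real.one_le_rpow (by norm_num) (by linarith), fun Q ε hQ hε => ?_⟩
  set r := 4 ^ p * Q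
  set r' := r ^ (-(1 : ℝ) / (p - 1))
  have hr : 1 < r := one_lt_mul_of_le_of_lt (Real.one_le_rpow (by norm_num) (by linarith)) hQ
  have hr'₀ : 0 < r' := Real.rpow_pos_of_pos (by linarith) _
  have hr'₁ : r' < 1 := Real.rpow_lt_one_of_one_lt_of_neg hr (div_neg_of_neg_of_pos (by norm_num)
    (by linarith))
  obtain ⟨B, hB, hflat, hB₁, hB₂⟩ := FlatSet.exists_isDoublingFlat (δ := ε * r' / r) (by positivity)
  have hσ : (fun x => stepWeight B r x ^ (-(1 : ℝ) / (p - 1))) = stepWeight B r' :=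
    stepWeight_rpow r _
  have hbdd : ∀ y ∈ apSet p (stepWeight B r) (stepWeight B r'), y ≤ r :=
    fun y => apSet_stepWeight_le hB hp.le hr.le hr'₀.le hr'₁.le
  refine ⟨stepWeight B r, isWeight_stepWeight hB (by linarith),
    ⟨1, r, one_pos, hr, ae_of_all _ (stepWeight_eq_one_or_eq B r)⟩, ?_, ?_,
    doublingLE_stepWeight_of_mem_Icc hB hr.le hr'₀ hr'₁.le ⟨by linarith, le_rfl⟩ hε.le hflat, ?_⟩
    <;> rw [hσ]
  · calc Q = r / 4 ^ p := (mul_div_cancel_left₀ Q (by positivity)).symm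
      _ ≤ _ := div_four_rpow_le_avgOn_mul hB hp.le hr.le hr'₀.le hB₁ hB₂
      _ ≤ _ := le_csSup ⟨r, hbdd⟩ ⟨0, 1, one_pos, rfl⟩
  · exact csSup_le ⟨_, 0, 1, one_pos, rfl⟩ hbdd
  · exact doublingLE_stepWeight_of_mem_Icc hB hr.le hr'₀ hr'₁.le ⟨le_rfl, by linarith⟩ hε.le hflat
end

section
/- Let p ∈ (1,∞) and let x, y > 0 satisfy x·y^{p−1} ≥ 1. Then there exist a₁, b₁, a₂, b₂ > 0 with a₂ ≤ x ≤ a₁ and b₁ ≤ y ≤ b₂ such that a₁·b₁^{p−1} = a₂·b₂^{p−1} = 1, x = (a₁+a₂)/2 and y = (b₁+b₂)/2. -/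
theorem statement7 (p : ℝ) (hp : 1 < p) (x y : ℝ) (hx : 0 < x) (hy : 0 < y)
    (hxy : 1 ≤ x * y ^ (p - 1)) :
    ∃ a₁ b₁ a₂ b₂ : ℝ, 0 < a₁ ∧ 0 < b₁ ∧ 0 < a₂ ∧ 0 < b₂ ∧
      a₂ ≤ x ∧ x ≤ a₁ ∧ b₁ ≤ y ∧ y ≤ b₂ ∧
      a₁ * b₁ ^ (p - 1) = 1 ∧ a₂ * b₂ ^ (p - 1) = 1 ∧
      x = (a₁ + a₂) / 2 ∧ y = (b₁ + b₂) / 2 := by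
  set q := p - 1 with hq
  have hq0 : 0 < q := by simp [hq]; linarith
  set f : ℝ → ℝ := fun t => ((y - t) ^ (-q) + (y + t) ^ (-q)) / 2 with hf
  set ε : ℝ := min (y / 2) ((2 * x) ^ (-(1 / q))) with hε
  have hεpos : 0 < ε := lt_min (by linarith) (Real.rpow_pos_of_pos (by linarith) _)
  have hεy : ε ≤ y / 2 := min_le_left _ _
  set t₀ : ℝ := y - ε with ht₀
  have ht₀0 : 0 ≤ t₀ := by simp [ht₀]; linarith
  have ht₀y : t₀ < y := by simp [ht₀]; linarith
  -- f 0 ≤ x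
  have hf0 : f 0 ≤ x := by
    have h1 : y ^ (-q) = (y ^ q)⁻¹ := Real.rpow_neg hy.le q
    have h2 : (y ^ q)⁻¹ ≤ x := by
      rw [inv_le_iff_one_le_mul₀ (Real.rpow_pos_of_pos hy q)]
      exact hxy
    simp only [hf, sub_zero, add_zero]
    rw [h1]; linarith
  -- x ≤ f t₀
  have hft₀ : x ≤ f t₀ := by
    have hεle : ε ≤ (2 * x) ^ (-(1 / q)) := min_le_right _ _
    have h2x : (0:ℝ) < 2 * x := by linarith
    have h1 : (2 * x) ≤ ε ^ (-q) := by
      have hεq : ε ^ q ≤ ((2 * x) ^ (-(1 / q))) ^ q :=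
        Real.rpow_le_rpow hεpos.le hεle hq0.le
      have h3 : ((2 * x) ^ (-(1 / q))) ^ q = (2 * x)⁻¹ := by
        rw [← Real.rpow_mul h2x.le]
        have he : -(1 / q) * q = -1 := by field_simp
        rw [he, Real.rpow_neg_one]
      rw [Real.rpow_neg hεpos.le, le_inv_comm₀ h2x (Real.rpow_pos_of_pos hεpos q)]
      rw [h3] at hεq
      exact hεq
    have h4 : (0:ℝ) < (y + t₀) ^ (-q) := Real.rpow_pos_of_pos (by linarith) _
    have h5 : (y - t₀) ^ (-q) = ε ^ (-q) := by rw [ht₀]; ring_nf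
    simp only [hf]
    rw [h5]
    linarith
  -- continuity on [0, t₀]
  have hcont : ContinuousOn f (Set.Icc 0 t₀) := by
    apply ContinuousOn.div_const
    apply ContinuousOn.add
    · apply ContinuousOn.rpow_const (by fun_prop)
      intro t ht
      left
      have h1 := ht.2
      have h2 : t < y := lt_of_le_of_lt h1 ht₀y
      have : 0 < y - t := by linarith
      exact this.ne'
    · apply ContinuousOn.rpow_const (by fun_prop)
      intro t ht
      left
      have := ht.1
      positivity
  have hx_mem : x ∈ Set.Icc (f 0) (f t₀) := ⟨hf0, hft₀⟩
  obtain ⟨t, ht, hft⟩ := intermediate_value_Icc ht₀0 hcont hx_mem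
  have hb₁pos : 0 < y - t := by have := ht.2; linarith [ht₀y]
  have hb₂pos : 0 < y + t := by have := ht.1; linarith
  have ht0 : 0 ≤ t := ht.1
  refine ⟨(y - t) ^ (-q), y - t, (y + t) ^ (-q), y + t,
    Real.rpow_pos_of_pos hb₁pos _, hb₁pos, Real.rpow_pos_of_pos hb₂pos _, hb₂pos,
    ?_, ?_, by linarith, by linarith, ?_, ?_, ?_, by ring⟩
  · -- a₂ ≤ x
    have hle : (y + t) ^ (-q) ≤ (y - t) ^ (-q) := by
      rw [Real.rpow_neg hb₁pos.le, Real.rpow_neg hb₂pos.le]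
      apply inv_anti₀ (Real.rpow_pos_of_pos hb₁pos _)
      exact Real.rpow_le_rpow hb₁pos.le (by linarith) hq0.le
    simp only [hf] at hft
    linarith
  · -- x ≤ a₁
    have hle : (y + t) ^ (-q) ≤ (y - t) ^ (-q) := by
      rw [Real.rpow_neg hb₁pos.le, Real.rpow_neg hb₂pos.le]
      apply inv_anti₀ (Real.rpow_pos_of_pos hb₁pos _)
      exact Real.rpow_le_rpow hb₁pos.le (by linarith) hq0.le
    simp only [hf] at hft
    linarith
  · rw [← Real.rpow_add hb₁pos]; simp
  · rw [← Real.rpow_add hb₂pos]; simp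
  · simp only [hf] at hft; linarith
end

section
/- Let p ∈ (1,∞). Define the weights w(t) := |t|^{p−1} and σ(t) := |t|^{−p/(p−1)} for |t| > 1, σ(t) := 1 for |t| ≤ 1. Then there exists a constant C(p) < ∞ such that for every bounded interval I ⊂ ℝ with |I| > 0, ⟨w⟩_I · ⟨σ⟩_I^{p−1} ≤ C(p). -/
open MeasureTheory Set

/-!
Write `σ t = max 1 |t| ^ (-q)` with `q = p / (p - 1) > 1`, `r = p - 1` and `M = max |a| |b|`, so
that `⟨|t| ^ r⟩ ≤ M ^ r` on `[a, b)`. If `M ≤ 2 (b - a)`, then `⟨σ⟩ ≤ ‖σ‖₁ / (b - a) ≤ 2 ‖σ‖₁ / M`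
by integrability of `σ`, and the product is at most `(2 ‖σ‖₁) ^ r`. Otherwise every point of
`[a, b)` has `|t| > M / 2`, so with `m = max 1 (M / 2)` we get `⟨σ⟩ ≤ m ^ (-q)` and the product is at
most `(2 m) ^ r * m ^ (-q r) ≤ 2 ^ r` because `q ≥ 1`.
-/

open Real

lemma ite_abs_le_one_eq_max_one_abs_rpow (q t : ℝ) :
    (if |t| ≤ 1 then 1 else |t| ^ (-q)) = max 1 |t| ^ (-q) := by
  split_ifs with ht
  · rw [max_eq_left ht, one_rpow]
  · rw [max_eq_right (not_le.1 ht).le]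

lemma continuous_max_one_abs_rpow (s : ℝ) : Continuous fun t : ℝ => max 1 |t| ^ s :=
  (continuous_const.max continuous_abs).rpow_const fun _ => Or.inl (lt_max_of_lt_left one_pos).ne'

lemma integrable_max_one_abs_rpow_neg {q : ℝ} (hq : 1 < q) :
    Integrable fun t : ℝ => max 1 |t| ^ (-q) := by
  have hbracket : Integrable fun t : ℝ => 2 ^ q * (1 + ‖t‖) ^ (-q) :=
    (integrable_one_add_norm (by simpa using hq)).const_mul _
  refine hbracket.mono' (continuous_max_one_abs_rpow _).aestronglyMeasurable
    (Filter.Eventually.of_forall fun t => ?_)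
  have hmax : 0 < max 1 |t| := lt_max_of_lt_left one_pos
  rw [norm_of_nonneg (rpow_nonneg hmax.le _), Real.norm_eq_abs]
  calc max 1 |t| ^ (-q) = 2 ^ q * (2 * max 1 |t|) ^ (-q) := by
        rw [mul_rpow zero_le_two hmax.le, rpow_neg zero_le_two, ← mul_assoc,
          mul_inv_cancel₀ (by positivity), one_mul]
    _ ≤ 2 ^ q * (1 + |t|) ^ (-q) := by
        gcongr 2 ^ q * ?_
        exact rpow_le_rpow_of_nonpos (by positivity)
          (by linarith [le_max_left 1 |t|, le_max_right 1 |t|]) (by linarith)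

section avgOn

variable {f : ℝ → ℝ} {a b : ℝ}

lemma avgOn_nonneg (hab : a ≤ b) (hf : ∀ x, 0 ≤ f x) : 0 ≤ avgOn f a b :=
  mul_nonneg (inv_nonneg.2 (sub_nonneg.2 hab))
    (setIntegral_nonneg measurableSet_Ico fun x _ => hf x)

lemma avgOn_le_of_forall_le {K : ℝ} (hab : a < b) (hf : IntegrableOn f (Ico a b))
    (hK : ∀ x ∈ Ico a b, f x ≤ K) : avgOn f a b ≤ K := by
  have hlen : 0 < b - a := sub_pos.2 hab
  have hint : ∫ x in Ico a b, f x ≤ (b - a) * K := by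
    calc ∫ x in Ico a b, f x ≤ ∫ _ in Ico a b, K :=
          setIntegral_mono_on hf (integrableOn_const measure_Ico_lt_top.ne) measurableSet_Ico hK
      _ = (b - a) * K := by
          rw [setIntegral_const, measureReal_def, volume_Ico, ENNReal.toReal_ofReal hlen.le,
            smul_eq_mul]
  calc avgOn f a b ≤ (b - a)⁻¹ * ((b - a) * K) := by unfold avgOn; gcongr
    _ = K := by field_simp

lemma avgOn_le_integral_div (hab : a < b) (hf : Integrable f) (hf0 : ∀ x, 0 ≤ f x) :
    avgOn f a b ≤ (∫ x, f x) / (b - a) := by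
  rw [avgOn, inv_mul_eq_div]
  exact div_le_div_of_nonneg_right
    (setIntegral_le_integral hf (Filter.Eventually.of_forall hf0)) (sub_pos.2 hab).le

end avgOn

lemma max_abs_le_abs_add_of_mem_Ico {a b t : ℝ} (ht : t ∈ Ico a b) :
    max |a| |b| ≤ |t| + (b - a) := by
  obtain ⟨hat, htb⟩ := ht
  apply max_le <;> cases abs_cases a <;> cases abs_cases b <;> cases abs_cases t <;> linarith

lemma avgOn_abs_rpow_le {r a b : ℝ} (hr : 0 ≤ r) (hab : a < b) :
    avgOn (fun t => |t| ^ r) a b ≤ max |a| |b| ^ r := by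
  refine avgOn_le_of_forall_le hab ?_ fun t ht => ?_
  · exact ((continuous_abs.rpow_const fun _ => Or.inr hr).integrableOn_Icc).mono_set
      Ico_subset_Icc_self
  · exact rpow_le_rpow (abs_nonneg t) (abs_le_max_abs_abs ht.1 ht.2.le) hr

section PowerWeights

variable {q r a b : ℝ}

lemma avgOn_mul_rpow_le_of_long (hq : 1 < q) (hr : 0 ≤ r) (hab : a < b)
    (hlong : max |a| |b| ≤ 2 * (b - a)) :
    avgOn (fun t => |t| ^ r) a b * avgOn (fun t => max 1 |t| ^ (-q)) a b ^ r ≤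
      (2 * ∫ t, max 1 |t| ^ (-q)) ^ r := by
  set S := ∫ t : ℝ, max 1 |t| ^ (-q)
  have hlen : 0 < b - a := sub_pos.2 hab
  have hσ0 : ∀ t : ℝ, 0 ≤ max 1 |t| ^ (-q) := fun t => by positivity
  have hS : 0 ≤ S := integral_nonneg hσ0
  have hσ := avgOn_le_integral_div hab (integrable_max_one_abs_rpow_neg hq) hσ0
  have hσavg0 := avgOn_nonneg hab.le hσ0
  calc _ ≤ max |a| |b| ^ r * (S / (b - a)) ^ r := by
        gcongr
        exact avgOn_abs_rpow_le hr hab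
    _ = (max |a| |b| / (b - a) * S) ^ r := by
        rw [← mul_rpow (by positivity) (by positivity)]
        ring_nf
    _ ≤ (2 * S) ^ r := by
        gcongr
        exact (div_le_iff₀ hlen).2 hlong

lemma avgOn_mul_rpow_le_of_short (hq : 1 ≤ q) (hr : 0 ≤ r) (hab : a < b)
    (hshort : 2 * (b - a) < max |a| |b|) :
    avgOn (fun t => |t| ^ r) a b * avgOn (fun t => max 1 |t| ^ (-q)) a b ^ r ≤ 2 ^ r := by
  set M := max |a| |b|
  set m := max 1 (M / 2)
  have hm : 1 ≤ m := le_max_left _ _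
  have hσ : avgOn (fun t => max 1 |t| ^ (-q)) a b ≤ m ^ (-q) := by
    refine avgOn_le_of_forall_le hab ?_ fun t ht => ?_
    · exact (continuous_max_one_abs_rpow _).integrableOn_Icc.mono_set Ico_subset_Icc_self
    · have hfar : M / 2 < |t| := by linarith [max_abs_le_abs_add_of_mem_Ico ht]
      exact rpow_le_rpow_of_nonpos (by linarith) (max_le_max le_rfl hfar.le) (by linarith)
  have hσavg0 : 0 ≤ avgOn (fun t => max 1 |t| ^ (-q)) a b := avgOn_nonneg hab.le fun t => by positivity
  calc _ ≤ (2 * m) ^ r * (m ^ (-q)) ^ r := by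
        gcongr
        exact (avgOn_abs_rpow_le hr hab).trans
          (rpow_le_rpow (by positivity) (by linarith [le_max_right 1 (M / 2)]) hr)
    _ = 2 ^ r * m ^ (r + -q * r) := by
        rw [mul_rpow zero_le_two (by linarith), ← rpow_mul (by linarith),
          rpow_add (by linarith), mul_assoc]
    _ ≤ 2 ^ r :=
        mul_le_of_le_one_right (by positivity) (rpow_le_one_of_one_le_of_nonpos hm (by nlinarith))

end PowerWeights

theorem statement16 (p : ℝ) (hp : 1 < p) :
    ∃ C : ℝ, ∀ a b : ℝ, a < b →
      avgOn (fun t => |t| ^ (p - 1)) a b *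
        (avgOn (fun t => if |t| ≤ 1 then 1 else |t| ^ (-(p / (p - 1)))) a b) ^ (p - 1) ≤ C := by
  have hr : 0 ≤ p - 1 := by linarith
  have hq : 1 < p / (p - 1) := (one_lt_div (by linarith)).2 (by linarith)
  refine ⟨max (2 ^ (p - 1)) ((2 * ∫ t, max 1 |t| ^ (-(p / (p - 1)))) ^ (p - 1)),
    fun a b hab => ?_⟩
  simp only [ite_abs_le_one_eq_max_one_abs_rpow]
  rcases le_or_gt (max |a| |b|) (2 * (b - a)) with hlong | hshort
  · exact (avgOn_mul_rpow_le_of_long hq hr hab hlong).trans (le_max_right _ _)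
  · exact (avgOn_mul_rpow_le_of_short hq.le hr hab hshort).trans (le_max_left _ _)
end

section
/- Let p ∈ (1,∞). For every t > 1 one has ∫_0^1 1/(t−y) dy = ln(t/(t−1)), and ∫_2^∞ (ln(t/(t−1)))^p · t^{p−1} dt = ∞. (Consequently, for the weights w(t) := |t|^{p−1} and σ(t) := |t|^{−p/(p−1)} for |t| > 1, σ(t) := 1 for |t| ≤ 1, the function f := 1_{[0,1)} satisfies ∫_ℝ |f|^p σ dt = 1 while the Hilbert transform H(fσ) = H(1_{[0,1)}) fails to lie in L^p(w), so the two-weight Muckenhoupt A_p condition does not imply boundedness of the Hilbert transform from L^p(σ^{1−p}) to L^p(w).) -/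
open MeasureTheory Set

/-!
Substituting `x = t - y` turns the first integral into `∫ x in t - 1..t, x⁻¹`. For the second,
`1 - x⁻¹ ≤ log x` at `x = t / (t - 1)` gives `t⁻¹ ≤ log (t / (t - 1))`, so the integrand dominates
`t⁻¹ ^ p * t ^ (p - 1) = t⁻¹`, which is not integrable at infinity.
-/

theorem setIntegral_Ico_inv_sub {a b t : ℝ} (hab : a ≤ b) (hbt : b < t) :
    ∫ y in Ico a b, (t - y)⁻¹ = Real.log ((t - a) / (t - b)) := by
  rw [setIntegral_congr_set Ico_ae_eq_Ioc, ← intervalIntegral.integral_of_le hab,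
    intervalIntegral.integral_comp_sub_left (fun x => x⁻¹) t,
    integral_inv_of_pos (by linarith) (by linarith)]

theorem inv_le_log_div_sub_one {t : ℝ} (ht : 1 < t) : t⁻¹ ≤ Real.log (t / (t - 1)) := by
  have ht₁ : 0 < t - 1 := by linarith
  convert Real.one_sub_inv_le_log_of_pos (div_pos (by linarith) ht₁) using 1
  field_simp
  ring

theorem inv_le_log_div_sub_one_rpow_mul_rpow {p t : ℝ} (hp : 0 ≤ p) (ht : 1 < t) :
    t⁻¹ ≤ Real.log (t / (t - 1)) ^ p * t ^ (p - 1) := by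
  have ht₀ : 0 < t := by linarith
  calc t⁻¹ = t⁻¹ ^ p * t ^ (p - 1) := by
        rw [Real.inv_rpow ht₀.le, ← Real.rpow_neg ht₀.le, ← Real.rpow_add ht₀,
          show -p + (p - 1) = -1 by ring, Real.rpow_neg_one]
    _ ≤ Real.log (t / (t - 1)) ^ p * t ^ (p - 1) := by
        gcongr
        exact inv_le_log_div_sub_one ht

theorem lintegral_Ioi_ofReal_inv_eq_top (a : ℝ) :
    ∫⁻ t in Ioi a, ENNReal.ofReal t⁻¹ = ⊤ := by
  refine eq_top_mono (lintegral_mono_set (Ioi_subset_Ioi (le_max_left a 0))) ?_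
  by_contra h
  have hnonneg : 0 ≤ᵐ[volume.restrict (Ioi (max a 0))] fun t : ℝ => t⁻¹ :=
    ae_restrict_of_forall_mem measurableSet_Ioi fun t ht =>
      inv_nonneg.2 ((le_max_right a 0).trans (le_of_lt ht))
  exact not_integrableOn_Ioi_inv
    ((lintegral_ofReal_ne_top_iff_integrable measurable_inv.aestronglyMeasurable hnonneg).1 h)

theorem statement17 (p : ℝ) (hp : 1 < p) :
    (∀ t : ℝ, 1 < t →
      (∫ y in Set.Ico (0 : ℝ) 1, 1 / (t - y)) = Real.log (t / (t - 1))) ∧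
    (∫⁻ t in Set.Ioi (2 : ℝ),
        ENNReal.ofReal ((Real.log (t / (t - 1))) ^ p * t ^ (p - 1))) = ⊤ := by
  refine ⟨fun t ht => ?_, ?_⟩
  · simpa only [one_div, sub_zero] using setIntegral_Ico_inv_sub zero_le_one ht
  · refine eq_top_mono (setLIntegral_mono' measurableSet_Ioi fun t ht => ?_)
      (lintegral_Ioi_ofReal_inv_eq_top 2)
    exact ENNReal.ofReal_le_ofReal
      (inv_le_log_div_sub_one_rpow_mul_rpow (by linarith) (one_lt_two.trans ht))
end

section
/- For every p ∈ (1,∞) there exist δ > 0 and a constant C(p) > 0 such that for every weight w on ℝ with doubling constant D_w ≤ 2+δ and for every λ ∈ ℂ with Im λ > 0, one has ∫_ℝ (Im λ)^{p−1}/|x−λ|^p · w(x) dx ≤ C(p) · (1/|I_λ|) ∫_{I_λ} w(x) dx, where I_λ := [Re λ − Im λ, Re λ + Im λ]. -/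
open MeasureTheory Set

/-!
Cut `ℝ` into the dyadic intervals `Iₙ = [Re λ - 2ⁿ Im λ, Re λ + 2ⁿ Im λ)`. On the first `Iₙ`
containing `x` the kernel `(Im λ)^(p-1) / |x - λ|^p` is at most `2^p (Im λ)⁻¹ (2^p)⁻ⁿ`, while
doubling gives `w(Iₙ) ≤ Dⁿ w(I₀)`. The integral is therefore at most
`2^p (Im λ)⁻¹ w(I₀) ∑ (D / 2^p)ⁿ`, a convergent series once `D < 2^p`; and `2 < 2^p` for `p > 1`
leaves room for `D = 2 + δ`.
-/

theorem DoublingLE.integral_Ico_two_pow_mul_le {w : ℝ → ℝ} {D : ℝ} (hw : DoublingLE w D)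
    (hD : 0 ≤ D) (c : ℝ) {r : ℝ} (hr : 0 < r) (n : ℕ) :
    ∫ x in Ico (c - 2 ^ n * r) (c + 2 ^ n * r), w x ≤
      D ^ n * ∫ x in Ico (c - r) (c + r), w x := by
  induction n with
  | zero => simp
  | succ n ih =>
    have step := hw (c - 2 ^ n * r) (c + 2 ^ n * r) (by linarith [mul_pos (pow_pos two_pos n) hr])
    rw [show c - 2 ^ n * r - (c + 2 ^ n * r - (c - 2 ^ n * r)) / 2 = c - 2 ^ (n + 1) * r by ring,
      show c + 2 ^ n * r + (c + 2 ^ n * r - (c - 2 ^ n * r)) / 2 = c + 2 ^ (n + 1) * r by ring]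
      at step
    calc _ ≤ D * ∫ x in Ico (c - 2 ^ n * r) (c + 2 ^ n * r), w x := step
      _ ≤ D * (D ^ n * ∫ x in Ico (c - r) (c + r), w x) := mul_le_mul_of_nonneg_left ih hD
      _ = _ := by ring

theorem exists_mem_Ico_two_pow_mul_le (c x : ℝ) {r : ℝ} (hr : 0 < r) :
    ∃ n : ℕ, x ∈ Ico (c - 2 ^ n * r) (c + 2 ^ n * r) ∧ 2 ^ n * r ≤ 2 * max r |x - c| := by
  obtain ⟨n, hle, hlt⟩ := exists_nat_pow_near (x := max r |x - c| / r) (y := (2 : ℝ))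
    (by rw [le_div_iff₀ hr]; simp) one_lt_two
  rw [le_div_iff₀ hr] at hle
  rw [div_lt_iff₀ hr] at hlt
  refine ⟨n + 1, ⟨?_, ?_⟩, by rw [pow_succ]; linarith⟩
  · linarith [neg_abs_le (x - c), le_max_right r |x - c|]
  · linarith [le_abs_self (x - c), le_max_right r |x - c|]

theorem max_im_abs_sub_re_le_norm (x : ℝ) (l : ℂ) : max l.im |x - l.re| ≤ ‖(x : ℂ) - l‖ := by
  refine max_le ((le_abs_self l.im).trans ?_) ?_
  · simpa using Complex.abs_im_le_norm ((x : ℂ) - l)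
  · simpa using Complex.abs_re_le_norm ((x : ℂ) - l)

theorem rpow_sub_one_div_rpow_le {p y s : ℝ} (hp : 0 ≤ p) (hy : 0 < y) {n : ℕ}
    (hs : 2 ^ n * y ≤ 2 * s) :
    y ^ (p - 1) / s ^ p ≤ 2 ^ p / y * ((2 ^ p)⁻¹) ^ n := by
  calc y ^ (p - 1) / s ^ p ≤ y ^ (p - 1) / (2 ^ n * y / 2) ^ p := by
        gcongr; linarith
    _ = 2 ^ p / y * ((2 ^ p)⁻¹) ^ n := by
        rw [Real.div_rpow (by positivity) zero_le_two, Real.mul_rpow (by positivity) hy.le,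
          ← Real.rpow_pow_comm zero_le_two, Real.rpow_sub_one hy.ne', inv_pow]
        field_simp

theorem lintegral_ofReal_mul_le_tsum {α : Type*} [MeasurableSpace α] {μ : Measure α}
    {k w : α → ℝ} {s : ℕ → Set α} {K : ℕ → ℝ} (hs : ∀ n, MeasurableSet (s n))
    (hw : ∀ n, IntegrableOn w (s n) μ) (hw0 : 0 ≤ᵐ[μ] w) (hK : ∀ n, 0 ≤ K n)
    (hk : ∀ x, ∃ n, x ∈ s n ∧ k x ≤ K n) :
    ∫⁻ x, ENNReal.ofReal (k x * w x) ∂μ ≤ ∑' n, ENNReal.ofReal (K n * ∫ x in s n, w x ∂μ) := by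
  calc ∫⁻ x, ENNReal.ofReal (k x * w x) ∂μ
      ≤ ∫⁻ x, ∑' n, (s n).indicator (fun x ↦ ENNReal.ofReal (K n * w x)) x ∂μ := by
        refine lintegral_mono_ae (hw0.mono fun x hx ↦ ?_)
        obtain ⟨n, hxn, hkx⟩ := hk x
        refine le_trans ?_ (ENNReal.le_tsum n)
        rw [indicator_of_mem hxn]
        exact ENNReal.ofReal_le_ofReal (mul_le_mul_of_nonneg_right hkx hx)
    _ = ∑' n, ENNReal.ofReal (K n * ∫ x in s n, w x ∂μ) := by
        rw [lintegral_tsum fun n ↦ (aemeasurable_indicator_iff (hs n)).mpr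
          ((hw n).const_mul (K n)).aemeasurable.ennreal_ofReal]
        refine tsum_congr fun n ↦ ?_
        rw [lintegral_indicator (hs n), ← integral_const_mul,
          ofReal_integral_eq_lintegral_ofReal ((hw n).const_mul (K n))
            (ae_restrict_of_ae (hw0.mono fun x hx ↦ mul_nonneg (hK n) hx))]

theorem lintegral_rpow_div_norm_sub_rpow_mul_le {w : ℝ → ℝ} {D p : ℝ} (hw : LocallyIntegrable w)
    (hw0 : 0 ≤ᵐ[volume] w) (hD : DoublingLE w D) (hD0 : 0 ≤ D) (hp : 0 ≤ p) (hDp : D < 2 ^ p)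
    {l : ℂ} (hl : 0 < l.im) :
    ∫⁻ x : ℝ, ENNReal.ofReal (l.im ^ (p - 1) / ‖(x : ℂ) - l‖ ^ p * w x) ≤
      ENNReal.ofReal (2 ^ p / l.im * (1 - D / 2 ^ p)⁻¹ *
        ∫ x in Ico (l.re - l.im) (l.re + l.im), w x) := by
  have hq : 0 ≤ D / 2 ^ p := by positivity
  have hq1 : D / 2 ^ p < 1 := (div_lt_one (by positivity)).2 hDp
  calc _ ≤ ∑' n : ℕ, ENNReal.ofReal (2 ^ p / l.im * ((2 ^ p)⁻¹) ^ n *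
          ∫ x in Ico (l.re - 2 ^ n * l.im) (l.re + 2 ^ n * l.im), w x) := by
        refine lintegral_ofReal_mul_le_tsum (fun _ ↦ measurableSet_Ico)
          (fun _ ↦ (hw.integrableOn_isCompact isCompact_Icc).mono_set Ico_subset_Icc_self) hw0
          (fun _ ↦ by positivity) fun x ↦ ?_
        obtain ⟨n, hxn, hn⟩ := exists_mem_Ico_two_pow_mul_le l.re x hl
        exact ⟨n, hxn, rpow_sub_one_div_rpow_le hp hl
          (hn.trans (by gcongr; exact max_im_abs_sub_re_le_norm x l))⟩
    _ ≤ ∑' n : ℕ, ENNReal.ofReal (2 ^ p / l.im * ∫ x in Ico (l.re - l.im) (l.re + l.im), w x) *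
          ENNReal.ofReal (D / 2 ^ p) ^ n := by
        refine ENNReal.tsum_le_tsum fun n ↦ ?_
        rw [← ENNReal.ofReal_pow hq, ← ENNReal.ofReal_mul' (by positivity)]
        refine ENNReal.ofReal_le_ofReal ?_
        calc _ ≤ 2 ^ p / l.im * ((2 ^ p)⁻¹) ^ n *
              (D ^ n * ∫ x in Ico (l.re - l.im) (l.re + l.im), w x) := by
              gcongr; exact hD.integral_Ico_two_pow_mul_le hD0 _ hl n
          _ = _ := by rw [div_pow]; ring
    _ = _ := by
        rw [ENNReal.tsum_mul_left, ENNReal.tsum_geometric, ← ENNReal.ofReal_one,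
          ← ENNReal.ofReal_sub _ hq, ← ENNReal.ofReal_inv_of_pos (by linarith),
          ← ENNReal.ofReal_mul' (inv_nonneg.2 (sub_nonneg.2 hq1.le))]
        congr 1
        ring

theorem statement18 (p : ℝ) (hp : 1 < p) :
    ∃ δ C : ℝ, 0 < δ ∧ 0 < C ∧
      ∀ w : ℝ → ℝ, IsWeight w → DoublingLE w (2 + δ) →
        ∀ l : ℂ, 0 < l.im →
          (∫⁻ x : ℝ, ENNReal.ofReal
              (l.im ^ (p - 1) / ‖(x : ℂ) - l‖ ^ p * w x)) ≤
            ENNReal.ofReal (C * ((2 * l.im)⁻¹ *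
              ∫ x in Set.Ico (l.re - l.im) (l.re + l.im), w x)) := by
  have h2p : (2 : ℝ) < 2 ^ p := by
    simpa using Real.rpow_lt_rpow_of_exponent_lt one_lt_two hp
  have hD : 2 + (2 ^ p - 2) / 2 < (2 : ℝ) ^ p := by linarith
  have hr : 0 < 1 - (2 + (2 ^ p - 2) / 2) / (2 : ℝ) ^ p :=
    sub_pos.2 ((div_lt_one (by linarith)).2 hD)
  refine ⟨(2 ^ p - 2) / 2, 2 * 2 ^ p * (1 - (2 + (2 ^ p - 2) / 2) / 2 ^ p)⁻¹,
    by linarith, by positivity, fun w ⟨_, hw, hw0⟩ hdoub l hl ↦ ?_⟩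
  convert lintegral_rpow_div_norm_sub_rpow_mul_le hw (hw0.mono fun _ ↦ le_of_lt) hdoub
    (by linarith) (by linarith) hD hl using 2
  field_simp
end
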